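/- arXiv:math/0609115 — 8 statements merged into one kernel-verified Lean document; each statement's English description precedes it below -/
import Mathlib

section
/- Let R be a commutative ring equipped with a ℤ-grading given by additive subgroups 𝒜 : ℤ → AddSubgroup R (with 1 ∈ 𝒜 0 and 𝒜 m · 𝒜 n ⊆ 𝒜 (m+n), every element decomposing uniquely as a sum of homogeneous components), and let a ∈ 𝒜 1 be a unit of R. Then there is a ring isomorphism from the Laurent polynomial ring (𝒜 0)[T, T⁻¹] over the degree-zero subring 𝒜 0 onto R which sends T to a and restricts to the inclusion on 𝒜 0; moreover this isomorphism identifies, for each n ∈ ℤ, the homogeneous component of degree n of the Laurent polynomial ring with 𝒜 n. -/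
/-!
Evaluation at `T ↦ a` sends `C r * T n` to `r * a ^ n ∈ 𝒜 n`, so it commutes with taking
homogeneous components. A homogeneous unit has a homogeneous inverse, hence `x ↦ x * a ^ (-n)`
maps `𝒜 n` onto `𝒜 0`: the evaluation is bijective one degree at a time.
-/

open DirectSum

namespace SetLike

variable {ι R σ : Type*} [DecidableEq ι] [AddGroup ι] [Semiring R] [SetLike σ R]
  [AddSubmonoidClass σ R] (𝒜 : ι → σ) [GradedRing 𝒜] {u : Rˣ} {i : ι}

theorem units_inv_mem_graded (hu : (u : R) ∈ 𝒜 i) : ((u⁻¹ : Rˣ) : R) ∈ 𝒜 (-i) := by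
  -- the degree `-i` component of `u⁻¹` is already a right inverse of `u`
  have h : (u : R) * decompose 𝒜 ((u⁻¹ : Rˣ) : R) (-i) = 1 := by
    rw [← coe_decompose_mul_add_of_left_mem 𝒜 hu, Units.mul_inv, add_neg_cancel,
      decompose_of_mem_same 𝒜 GradedOne.one_mem]
  rw [Units.inv_eq_of_mul_eq_one_right h]
  exact coe_mem _

theorem units_zpow_mem_graded (hu : (u : R) ∈ 𝒜 i) (n : ℤ) : ((u ^ n : Rˣ) : R) ∈ 𝒜 (n • i) := by
  cases n with
  | ofNat m => simpa using pow_mem_graded m hu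
  | negSucc m =>
    rw [zpow_negSucc, negSucc_zsmul]
    exact units_inv_mem_graded 𝒜 (by simpa using pow_mem_graded (m + 1) hu)

end SetLike

namespace LaurentPolynomial

variable {R σ : Type*} [CommSemiring R] [SetLike σ R] [AddSubmonoidClass σ R]
  (𝒜 : ℤ → σ) [GradedRing 𝒜] {u : Rˣ}

theorem eval₂_C_mul_T_mem_graded (hu : (u : R) ∈ 𝒜 1) (r : 𝒜 0) (n : ℤ) :
    eval₂ (algebraMap (𝒜 0) R) u (C r * T n) ∈ 𝒜 n := by
  simpa using SetLike.mul_mem_graded r.2 (SetLike.units_zpow_mem_graded 𝒜 hu n)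

theorem coe_decompose_eval₂ (hu : (u : R) ∈ 𝒜 1) (p : LaurentPolynomial (𝒜 0)) (n : ℤ) :
    (decompose 𝒜 (eval₂ (algebraMap (𝒜 0) R) u p) n : R) = p.coeff n * ((u ^ n : Rˣ) : R) := by
  induction p using LaurentPolynomial.induction_on' with
  | add p q hp hq => simp [hp, hq, add_mul]
  | C_mul_T m r =>
    have hcoeff : (C r * T m).coeff n = if m = n then r else 0 := by
      rw [← single_eq_C_mul_T, AddMonoidAlgebra.coeff_single, Finsupp.single_apply]
    obtain rfl | hmn := eq_or_ne m n
    · rw [decompose_of_mem_same 𝒜 (eval₂_C_mul_T_mem_graded 𝒜 hu r m), hcoeff, if_pos rfl]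
      simp
    · rw [decompose_of_mem_ne 𝒜 (eval₂_C_mul_T_mem_graded 𝒜 hu r m) hmn, hcoeff, if_neg hmn]
      simp

theorem eval₂_injective_of_mem_graded_one (hu : (u : R) ∈ 𝒜 1) :
    Function.Injective (eval₂ (algebraMap (𝒜 0) R) u) := by
  intro p q hpq
  ext n
  have h := coe_decompose_eval₂ 𝒜 hu p n
  rw [hpq, coe_decompose_eval₂ 𝒜 hu q n] at h
  exact ((Units.mul_left_inj _).mp h).symm

theorem image_eval₂_C_mul_T (hu : (u : R) ∈ 𝒜 1) (n : ℤ) :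
    eval₂ (algebraMap (𝒜 0) R) u '' {f | ∃ r : 𝒜 0, f = C r * T n} = (𝒜 n : Set R) := by
  refine Set.Subset.antisymm ?_ fun x hx => ?_
  · rintro _ ⟨_, ⟨r, rfl⟩, rfl⟩
    exact eval₂_C_mul_T_mem_graded 𝒜 hu r n
  · have hr : x * ((u ^ (-n) : Rˣ) : R) ∈ 𝒜 0 := by
      simpa using SetLike.mul_mem_graded hx (SetLike.units_zpow_mem_graded 𝒜 hu (-n))
    refine ⟨C ⟨_, hr⟩ * T n, ⟨_, rfl⟩, ?_⟩
    simp [mul_assoc, ← Units.val_mul]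

theorem eval₂_surjective_of_mem_graded_one (hu : (u : R) ∈ 𝒜 1) :
    Function.Surjective (eval₂ (algebraMap (𝒜 0) R) u) := by
  intro x
  induction x using Decomposition.inductionOn 𝒜 with
  | zero => exact ⟨0, map_zero _⟩
  | homogeneous m =>
    obtain ⟨p, -, hp⟩ := (image_eval₂_C_mul_T 𝒜 hu _).ge m.2
    exact ⟨p, hp⟩
  | add x y hx hy =>
    obtain ⟨p, rfl⟩ := hx
    obtain ⟨q, rfl⟩ := hy
    exact ⟨p + q, map_add _ p q⟩

end LaurentPolynomial

open LaurentPolynomial in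
/-- For a ℤ-graded commutative ring `R` and a degree-one element `a` which is a unit of `R`,
there is a ring isomorphism from the Laurent polynomial ring `(𝒜 0)[T, T⁻¹]` over the
degree-zero subring `𝒜 0` onto `R`, sending `T` to `a` and restricting to the inclusion on
`𝒜 0`; moreover, for each `n : ℤ`, it identifies the degree-`n` homogeneous component
`{ C r * T n : r ∈ 𝒜 0 }` of the Laurent polynomial ring with `𝒜 n`. -/
theorem laurent_equiv_of_graded_of_isUnit_degree_one
    {R : Type*} [CommRing R] (𝒜 : ℤ → AddSubgroup R) [GradedRing 𝒜]
    (a : R) (ha : a ∈ 𝒜 1) (hu : IsUnit a) :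
    ∃ e : LaurentPolynomial (𝒜 0) ≃+* R,
      e (T 1) = a ∧
      (∀ r : 𝒜 0, e (C r) = (r : R)) ∧
      (∀ n : ℤ,
        e '' { f : LaurentPolynomial (𝒜 0) | ∃ r : 𝒜 0, f = C r * T n } =
          (𝒜 n : Set R)) := by
  obtain ⟨u, rfl⟩ := hu
  have hbij : Function.Bijective (eval₂ (algebraMap (𝒜 0) R) u) :=
    ⟨eval₂_injective_of_mem_graded_one 𝒜 ha, eval₂_surjective_of_mem_graded_one 𝒜 ha⟩
  exact ⟨RingEquiv.ofBijective _ hbij, by simp, fun r => by simp, image_eval₂_C_mul_T 𝒜 ha⟩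
end

section
/- Let R₁, R₂, R₃ be commutative rings, each with a ℤ-grading by additive subgroups 𝒜ⁱ : ℤ → AddSubgroup Rᵢ (1 ∈ 𝒜ⁱ 0, 𝒜ⁱ m · 𝒜ⁱ n ⊆ 𝒜ⁱ (m+n), internal direct sum), and let eᵢ ∈ 𝒜ⁱ 1 be a unit of Rᵢ for i = 1,2,3. Let φ : R₁ ⊗[ℤ] R₂ → R₃ be a surjective ring homomorphism such that φ maps (𝒜¹ m) ⊗ (𝒜² n) into 𝒜³ (m+n) for all m, n, such that φ(e₁ ⊗ 1) = φ(1 ⊗ e₂) = e₃, and such that the kernel of φ is the ideal of R₁ ⊗[ℤ] R₂ generated by the single element e₁ ⊗ 1 − 1 ⊗ e₂. Then the restriction of φ induces a ring isomorphism from (𝒜¹ 0) ⊗[ℤ] (𝒜² 0) onto the degree-zero subring 𝒜³ 0 of R₃. -/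
/-!
Dehomogenizing by a degree-one unit `u`, i.e. `x ↦ x * u ^ (-m)` on `𝒜 m`, is a ring retraction
`R → 𝒜 0`. The tensor product `π` of the retractions of `R₁` and `R₂` is left inverse to the
natural map `ι : 𝒜 0 ⊗ ℬ 0 → R₁ ⊗ R₂` and kills `e₁ ⊗ 1 - 1 ⊗ e₂`, so `ι t ∈ ker φ` forces `t = 0`.
Any ring map `h` with `h (e₁ ⊗ 1) = h (1 ⊗ e₂) = 1` satisfies `h ∘ ι ∘ π = h`; applied to the
retraction of `R₃` after `φ`, this gives surjectivity onto `𝒞 0`.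
-/

open DirectSum

section
variable {ι R σ : Type*} [AddGroup ι] [DecidableEq ι] [Ring R] [SetLike σ R]
  [AddSubgroupClass σ R] {𝒜 : ι → σ} [GradedRing 𝒜]

theorem Units.inv_mem_graded {u : Rˣ} {i : ι} (hu : (u : R) ∈ 𝒜 i) :
    ((u⁻¹ : Rˣ) : R) ∈ 𝒜 (-i) := by
  have h : (u : R) * decompose 𝒜 ((u⁻¹ : Rˣ) : R) (-i) = 1 := by
    rw [← coe_decompose_mul_add_of_left_mem 𝒜 hu, Units.mul_inv, add_neg_cancel,
      decompose_of_mem_same 𝒜 SetLike.GradedOne.one_mem]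
  rw [← Units.eq_inv_of_mul_eq_one_left h]
  exact SetLike.coe_mem _

theorem Units.zpow_mem_graded {u : Rˣ} {i : ι} (hu : (u : R) ∈ 𝒜 i) (k : ℤ) :
    ((u ^ k : Rˣ) : R) ∈ 𝒜 (k • i) := by
  obtain ⟨n, rfl | rfl⟩ := k.eq_nat_or_neg
  · simpa using SetLike.pow_mem_graded n hu
  · simpa [inv_pow] using SetLike.pow_mem_graded n (Units.inv_mem_graded hu)

end

namespace GradedRing

section Dehomogenize

variable {R σ : Type*} [CommRing R] [SetLike σ R] [AddSubgroupClass σ R]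
  (𝒜 : ℤ → σ) [GradedRing 𝒜]

noncomputable def dehomogenize (u : Rˣ) (hu : (u : R) ∈ 𝒜 1) : R →+* 𝒜 0 :=
  (toSemiring
    (fun m ↦
      ({ toFun x := ⟨x * ((u ^ (-m) : Rˣ) : R), by
           simpa using SetLike.mul_mem_graded x.2 (Units.zpow_mem_graded hu (-m))⟩
         map_zero' := by ext; simp
         map_add' x y := by ext; simp [add_mul] } : 𝒜 m →+ 𝒜 0))
    (Subtype.ext (by simp [SetLike.GradeZero.coe_one]))
    (fun {m n} x y ↦ Subtype.ext (by
      simp only [AddMonoidHom.coe_mk, ZeroHom.coe_mk, SetLike.coe_gMul, SetLike.GradeZero.coe_mul,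
        neg_add, zpow_add, Units.val_mul]
      ring))).comp
    (decomposeRingEquiv 𝒜).toRingHom

variable {𝒜} {u : Rˣ} (hu : (u : R) ∈ 𝒜 1)

theorem coe_dehomogenize_of_mem {m : ℤ} {x : R} (hx : x ∈ 𝒜 m) :
    (dehomogenize 𝒜 u hu x : R) = x * ((u ^ (-m) : Rˣ) : R) := by
  simp [dehomogenize, decomposeRingEquiv, decompose_of_mem 𝒜 hx]

theorem dehomogenize_coe (x : 𝒜 0) : dehomogenize 𝒜 u hu x = x := by
  ext; simp [coe_dehomogenize_of_mem hu x.2]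

theorem dehomogenize_self : dehomogenize 𝒜 u hu u = 1 := by
  ext; simp [coe_dehomogenize_of_mem hu hu, SetLike.GradeZero.coe_one]

theorem apply_coe_dehomogenize {T : Type*} [Semiring T] {h : R →+* T} (hh : h u = 1) (x : R) :
    h (dehomogenize 𝒜 u hu x) = h x := by
  have hpow (k : ℤ) : h ((u ^ k : Rˣ) : R) = 1 := by
    have hmap : Units.map (h : R →* T) u = 1 := Units.ext hh
    change ((Units.map (h : R →* T) (u ^ k) : Tˣ) : T) = 1
    rw [map_zpow, hmap, one_zpow, Units.val_one]
  induction x using DirectSum.Decomposition.inductionOn 𝒜 with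
  | zero => simp
  | homogeneous x => rw [coe_dehomogenize_of_mem hu x.2, map_mul, hpow, mul_one]
  | add x y hx hy => rw [map_add, AddMemClass.coe_add, map_add, hx, hy, map_add]

end Dehomogenize

section TensorProduct

open scoped TensorProduct
open Algebra.TensorProduct

variable {R₁ R₂ σ₁ σ₂ : Type*} [CommRing R₁] [CommRing R₂] [SetLike σ₁ R₁] [SetLike σ₂ R₂]
  [AddSubgroupClass σ₁ R₁] [AddSubgroupClass σ₂ R₂] (𝒜 : ℤ → σ₁) (ℬ : ℤ → σ₂)
  [GradedRing 𝒜] [GradedRing ℬ]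

noncomputable def gradeZeroTensorMap : 𝒜 0 ⊗[ℤ] ℬ 0 →+* R₁ ⊗[ℤ] R₂ :=
  (map (algebraMap (𝒜 0) R₁).toIntAlgHom (algebraMap (ℬ 0) R₂).toIntAlgHom).toRingHom

noncomputable def dehomogenizeTensor (u₁ : R₁ˣ) (hu₁ : (u₁ : R₁) ∈ 𝒜 1) (u₂ : R₂ˣ)
    (hu₂ : (u₂ : R₂) ∈ ℬ 1) : R₁ ⊗[ℤ] R₂ →+* 𝒜 0 ⊗[ℤ] ℬ 0 :=
  (map (dehomogenize 𝒜 u₁ hu₁).toIntAlgHom (dehomogenize ℬ u₂ hu₂).toIntAlgHom).toRingHom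

variable {𝒜 ℬ} {u₁ : R₁ˣ} {u₂ : R₂ˣ}

theorem dehomogenizeTensor_gradeZeroTensorMap (hu₁ : (u₁ : R₁) ∈ 𝒜 1) (hu₂ : (u₂ : R₂) ∈ ℬ 1)
    (t : 𝒜 0 ⊗[ℤ] ℬ 0) :
    dehomogenizeTensor 𝒜 ℬ u₁ hu₁ u₂ hu₂ (gradeZeroTensorMap 𝒜 ℬ t) = t := by
  induction t using TensorProduct.induction_on with
  | zero => simp
  | tmul x y =>
    change dehomogenize 𝒜 u₁ hu₁ x ⊗ₜ dehomogenize ℬ u₂ hu₂ y = x ⊗ₜ y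
    rw [dehomogenize_coe, dehomogenize_coe]
  | add t t' ht ht' => rw [RingHom.map_add, RingHom.map_add, ht, ht']

theorem dehomogenizeTensor_sub_eq_zero (hu₁ : (u₁ : R₁) ∈ 𝒜 1) (hu₂ : (u₂ : R₂) ∈ ℬ 1) :
    dehomogenizeTensor 𝒜 ℬ u₁ hu₁ u₂ hu₂ ((u₁ : R₁) ⊗ₜ 1 - 1 ⊗ₜ (u₂ : R₂)) = 0 := by
  simp [dehomogenizeTensor, dehomogenize_self]

theorem eq_zero_of_gradeZeroTensorMap_mem_span (hu₁ : (u₁ : R₁) ∈ 𝒜 1)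
    (hu₂ : (u₂ : R₂) ∈ ℬ 1) {t : 𝒜 0 ⊗[ℤ] ℬ 0}
    (ht : gradeZeroTensorMap 𝒜 ℬ t ∈ Ideal.span {(u₁ : R₁) ⊗ₜ[ℤ] (1 : R₂) - 1 ⊗ₜ (u₂ : R₂)}) :
    t = 0 := by
  obtain ⟨c, hc⟩ := Ideal.mem_span_singleton'.mp ht
  rw [← dehomogenizeTensor_gradeZeroTensorMap hu₁ hu₂ t, ← hc, map_mul,
    dehomogenizeTensor_sub_eq_zero]
  exact mul_zero (dehomogenizeTensor 𝒜 ℬ u₁ hu₁ u₂ hu₂ c)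

theorem apply_gradeZeroTensorMap_dehomogenizeTensor (hu₁ : (u₁ : R₁) ∈ 𝒜 1)
    (hu₂ : (u₂ : R₂) ∈ ℬ 1) {T : Type*} [Semiring T] {h : R₁ ⊗[ℤ] R₂ →+* T}
    (h₁ : h ((u₁ : R₁) ⊗ₜ 1) = 1) (h₂ : h (1 ⊗ₜ (u₂ : R₂)) = 1) (w : R₁ ⊗[ℤ] R₂) :
    h (gradeZeroTensorMap 𝒜 ℬ (dehomogenizeTensor 𝒜 ℬ u₁ hu₁ u₂ hu₂ w)) = h w := by
  suffices h.comp ((gradeZeroTensorMap 𝒜 ℬ).comp (dehomogenizeTensor 𝒜 ℬ u₁ hu₁ u₂ hu₂)) = h from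
    congr($this w)
  ext a
  · simpa [gradeZeroTensorMap, dehomogenizeTensor] using
      apply_coe_dehomogenize hu₁ (h := h.comp includeLeftRingHom) h₁ a
  · simpa [gradeZeroTensorMap, dehomogenizeTensor] using
      apply_coe_dehomogenize hu₂ (h := h.comp includeRight.toRingHom) h₂ a

theorem map_gradeZeroTensorMap_mem {R₃ σ : Type*} [NonAssocSemiring R₃] [SetLike σ R₃]
    [AddSubmonoidClass σ R₃] {𝒞 : ℤ → σ} {φ : R₁ ⊗[ℤ] R₂ →+* R₃}
    (hφ : ∀ x ∈ 𝒜 0, ∀ y ∈ ℬ 0, φ (x ⊗ₜ y) ∈ 𝒞 0) (t : 𝒜 0 ⊗[ℤ] ℬ 0) :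
    φ (gradeZeroTensorMap 𝒜 ℬ t) ∈ 𝒞 0 := by
  induction t using TensorProduct.induction_on with
  | zero => simp
  | tmul x y => exact hφ x x.2 y y.2
  | add t t' ht ht' => simpa using add_mem ht ht'

end TensorProduct

end GradedRing

open GradedRing

open scoped TensorProduct in
/-- **Lemma `gr`** (ring version): let `R₁, R₂, R₃` be ℤ-graded commutative rings with
degree-one units `e₁, e₂, e₃`, and let `φ : R₁ ⊗[ℤ] R₂ → R₃` be a surjective graded ring
homomorphism with `φ(e₁ ⊗ 1) = φ(1 ⊗ e₂) = e₃` whose kernel is generated by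
`e₁ ⊗ 1 − 1 ⊗ e₂`.  Then the restriction of `φ` induces a ring isomorphism
`(𝒜¹ 0) ⊗[ℤ] (𝒜² 0) ≅ 𝒜³ 0`. -/
theorem gradeZero_tensor_equiv_of_ker_span
    {R₁ R₂ R₃ : Type*} [CommRing R₁] [CommRing R₂] [CommRing R₃]
    (𝒜 : ℤ → AddSubgroup R₁) (ℬ : ℤ → AddSubgroup R₂) (𝒞 : ℤ → AddSubgroup R₃)
    [GradedRing 𝒜] [GradedRing ℬ] [GradedRing 𝒞]
    (e₁ : R₁) (e₂ : R₂) (e₃ : R₃)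
    (he₁ : e₁ ∈ 𝒜 1) (he₂ : e₂ ∈ ℬ 1) (he₃ : e₃ ∈ 𝒞 1)
    (hu₁ : IsUnit e₁) (hu₂ : IsUnit e₂) (hu₃ : IsUnit e₃)
    (φ : R₁ ⊗[ℤ] R₂ →+* R₃) (hsurj : Function.Surjective φ)
    (hgraded : ∀ (m n : ℤ), ∀ x ∈ 𝒜 m, ∀ y ∈ ℬ n, φ (x ⊗ₜ[ℤ] y) ∈ 𝒞 (m + n))
    (hφ₁ : φ (e₁ ⊗ₜ[ℤ] (1 : R₂)) = e₃) (hφ₂ : φ ((1 : R₁) ⊗ₜ[ℤ] e₂) = e₃)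
    (hker : RingHom.ker φ = Ideal.span {e₁ ⊗ₜ[ℤ] (1 : R₂) - (1 : R₁) ⊗ₜ[ℤ] e₂}) :
    ∃ ψ : (𝒜 0) ⊗[ℤ] (ℬ 0) ≃+* 𝒞 0,
      ∀ (x : 𝒜 0) (y : ℬ 0),
        (ψ (x ⊗ₜ[ℤ] y) : R₃) = φ ((x : R₁) ⊗ₜ[ℤ] (y : R₂)) := by
  obtain ⟨u₁, rfl⟩ := hu₁
  obtain ⟨u₂, rfl⟩ := hu₂
  obtain ⟨u₃, rfl⟩ := hu₃
  set ι := gradeZeroTensorMap 𝒜 ℬ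
  set π := dehomogenizeTensor 𝒜 ℬ u₁ he₁ u₂ he₂
  set r := dehomogenize 𝒞 u₃ he₃
  have hι (t : 𝒜 0 ⊗[ℤ] ℬ 0) : φ (ι t) ∈ 𝒞 0 :=
    map_gradeZeroTensorMap_mem (fun x hx y hy ↦ by simpa using hgraded 0 0 x hx y hy) t
  have hrι (t : 𝒜 0 ⊗[ℤ] ℬ 0) : (r (φ (ι t)) : R₃) = φ (ι t) :=
    congr_arg Subtype.val (dehomogenize_coe he₃ ⟨_, hι t⟩)
  have hrπ (w : R₁ ⊗[ℤ] R₂) : r (φ (ι (π w))) = r (φ w) :=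
    apply_gradeZeroTensorMap_dehomogenizeTensor he₁ he₂ (h := r.comp φ)
      (by simp [hφ₁, r, dehomogenize_self]) (by simp [hφ₂, r, dehomogenize_self]) w
  refine ⟨.ofBijective (r.comp (φ.comp ι)) ⟨(injective_iff_map_eq_zero _).2 fun t ht ↦ ?_,
    fun z ↦ ?_⟩, fun x y ↦ hrι (x ⊗ₜ y)⟩
  · refine eq_zero_of_gradeZeroTensorMap_mem_span he₁ he₂ ?_
    rw [← hker, RingHom.mem_ker, ← hrι]
    exact congr_arg Subtype.val ht
  · obtain ⟨w, hw⟩ := hsurj z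
    exact ⟨π w, by simp [hrπ, hw, r, dehomogenize_coe]⟩
end

section
/- Let R be a commutative ring with an ℕ-grading by additive subgroups 𝒜 : ℕ → AddSubgroup R (1 ∈ 𝒜 0, 𝒜 m · 𝒜 n ⊆ 𝒜 (m+n), internal direct sum). Let a₁ ∈ 𝒜 1 and b ∈ 𝒜 1, let I = (b) be the principal ideal generated by b, and let π : R → R/I be the quotient map. Let R^df denote the subring { r / a₁ᵐ : m ∈ ℕ, r ∈ 𝒜 m } of the localization of R away from a₁, and let (R/I)^df denote the subring { π(r) / π(a₁)ᵐ : m ∈ ℕ, r ∈ 𝒜 m } of the localization of R/I away from π(a₁). Then the ring homomorphism h₀ : R^df → (R/I)^df induced by π is surjective, and its kernel is the ideal of R^df generated by the single element b / a₁; consequently R^df modulo the ideal generated by b/a₁ is isomorphic as a ring to (R/I)^df. -/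
set_option maxHeartbeats 1000000


/-- The subring `{ φ(r) / φ(a)^m : r ∈ 𝒜 m }` of a commutative ring `T`, relative to a ring
homomorphism `φ : R →+* T`: an element `x` belongs to it iff `x * φ(a)^m = φ(r)` for some
`m ∈ ℕ` and some `r ∈ 𝒜 m` (so that `x = φ(r) / φ(a)^m` whenever `φ(a)` is invertible). -/
def dfSubringHom {R : Type*} [CommRing R] (𝒜 : ℕ → AddSubgroup R)
    [GradedRing 𝒜] (a : R) (ha : a ∈ 𝒜 1) {T : Type*} [CommRing T] (φ : R →+* T) :
    Subring T where
  carrier := { x | ∃ (m : ℕ) (r : R), r ∈ 𝒜 m ∧ x * φ (a ^ m) = φ r }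
  zero_mem' := ⟨0, 0, zero_mem _, by simp⟩
  one_mem' := ⟨0, 1, SetLike.one_mem_graded 𝒜, by simp⟩
  add_mem' := by
    rintro x y ⟨m, r, hr, hx⟩ ⟨n, s, hs, hy⟩
    have hpow : ∀ k : ℕ, a ^ k ∈ 𝒜 k := fun k => by
      simpa using SetLike.pow_mem_graded k ha
    refine ⟨m + n, r * a ^ n + s * a ^ m, ?_, ?_⟩
    · refine add_mem (SetLike.mul_mem_graded hr (hpow n)) ?_
      have := SetLike.mul_mem_graded hs (hpow m)
      rwa [add_comm] at this
    · rw [pow_add, map_mul, map_add, map_mul, map_mul, ← hx, ← hy]; ring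
  neg_mem' := by
    rintro x ⟨m, r, hr, hx⟩
    exact ⟨m, -r, neg_mem hr, by rw [map_neg, ← hx]; ring⟩
  mul_mem' := by
    rintro x y ⟨m, r, hr, hx⟩ ⟨n, s, hs, hy⟩
    exact ⟨m + n, r * s, SetLike.mul_mem_graded hr hs,
      by rw [pow_add, map_mul, map_mul, ← hx, ← hy]; ring⟩

/-- The dimension-free part `R^df = { r / a^m : m ∈ ℕ, r ∈ 𝒜 m }`, as a subring of the
localization of `R` away from `a`. -/
noncomputable def dfSubring {R : Type*} [CommRing R] (𝒜 : ℕ → AddSubgroup R)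
    [GradedRing 𝒜] (a : R) (ha : a ∈ 𝒜 1) : Subring (Localization.Away a) :=
  dfSubringHom 𝒜 a ha (algebraMap R (Localization.Away a))

/-- The subring `(R/I)^df = { π(r) / π(a)^m : m ∈ ℕ, r ∈ 𝒜 m }` of the localization of `R/I`
away from `π(a)`, where `π : R → R/I` is a (quotient) ring homomorphism. -/
noncomputable def dfQuotSubring {R S : Type*} [CommRing R] [CommRing S]
    (𝒜 : ℕ → AddSubgroup R) [GradedRing 𝒜] (a : R) (ha : a ∈ 𝒜 1) (π : R →+* S) :
    Subring (Localization.Away (π a)) :=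
  dfSubringHom 𝒜 a ha ((algebraMap S (Localization.Away (π a))).comp π)

/-- The element `b / a₁` of `R^df` (where `b ∈ 𝒜 1`). -/
noncomputable def dfGen {R : Type*} [CommRing R] (𝒜 : ℕ → AddSubgroup R)
    [GradedRing 𝒜] (a₁ : R) (ha₁ : a₁ ∈ 𝒜 1) (b : R) (hb : b ∈ 𝒜 1) :
    dfSubring 𝒜 a₁ ha₁ :=
  ⟨IsLocalization.mk' (Localization.Away a₁) b
      (⟨a₁, Submonoid.mem_powers a₁⟩ : Submonoid.powers a₁),
    ⟨1, b, hb, by rw [pow_one]; exact IsLocalization.mk'_spec _ _ _⟩⟩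

/-- **Lemma `gr2`**: for an ℕ-graded commutative ring `R`, elements `a₁, b` of degree one,
`I = (b)` and `π : R → R/I` the quotient map, the ring homomorphism
`h₀ : R^df → (R/I)^df` induced by `π` (i.e. compatible with the induced map
`R[a₁⁻¹] → (R/I)[π(a₁)⁻¹]` on localizations) is surjective, its kernel is the ideal of `R^df`
generated by the single element `b / a₁`, and consequently `R^df` modulo the ideal generated
by `b / a₁` is isomorphic as a ring to `(R/I)^df`. -/
theorem dfSubring_quotient_of_principal_degree_one
    {R : Type*} [CommRing R] (𝒜 : ℕ → AddSubgroup R) [GradedRing 𝒜]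
    (a₁ b : R) (ha₁ : a₁ ∈ 𝒜 1) (hb : b ∈ 𝒜 1) :
    ∃ h₀ : dfSubring 𝒜 a₁ ha₁ →+*
        dfQuotSubring 𝒜 a₁ ha₁ (Ideal.Quotient.mk (Ideal.span {b})),
      (∀ x : dfSubring 𝒜 a₁ ha₁,
        (h₀ x : Localization.Away (Ideal.Quotient.mk (Ideal.span {b}) a₁)) =
          Localization.awayMap (Ideal.Quotient.mk (Ideal.span {b})) a₁ (x : Localization.Away a₁)) ∧
      Function.Surjective h₀ ∧
      RingHom.ker h₀ = Ideal.span {dfGen 𝒜 a₁ ha₁ b hb} ∧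
      Nonempty ((dfSubring 𝒜 a₁ ha₁ ⧸ Ideal.span {dfGen 𝒜 a₁ ha₁ b hb}) ≃+*
        dfQuotSubring 𝒜 a₁ ha₁ (Ideal.Quotient.mk (Ideal.span {b}))) := by
  classical
  set π : R →+* R ⧸ Ideal.span {b} := Ideal.Quotient.mk (Ideal.span {b}) with hπ
  set f : Localization.Away a₁ →+* Localization.Away (π a₁) :=
    Localization.awayMap π a₁ with hfdef
  have hpow : ∀ k : ℕ, a₁ ^ k ∈ 𝒜 k := fun k => by
    simpa using SetLike.pow_mem_graded k ha₁
  have hfalg : ∀ r : R, f ((algebraMap R (Localization.Away a₁)) r)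
      = (algebraMap (R ⧸ Ideal.span {b}) (Localization.Away (π a₁))) (π r) :=
    fun r => IsLocalization.map_eq _ r
  -- cancellation in the two localizations
  have hcan : ∀ (m : ℕ) (x y : Localization.Away (π a₁)),
      x * algebraMap (R ⧸ Ideal.span {b}) (Localization.Away (π a₁)) (π (a₁ ^ m))
        = y * algebraMap (R ⧸ Ideal.span {b}) (Localization.Away (π a₁)) (π (a₁ ^ m))
        → x = y := by
    intro m x y h
    have hu : IsUnit (algebraMap (R ⧸ Ideal.span {b}) (Localization.Away (π a₁)) (π (a₁ ^ m))) :=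
      IsLocalization.map_units _ (⟨π (a₁ ^ m), m, (map_pow π a₁ m).symm⟩ :
        Submonoid.powers (π a₁))
    exact hu.mul_left_cancel (by rw [mul_comm x, mul_comm y] at h; exact h)
  have hcanR : ∀ (m : ℕ) (x y : Localization.Away a₁),
      x * algebraMap R (Localization.Away a₁) (a₁ ^ m)
        = y * algebraMap R (Localization.Away a₁) (a₁ ^ m) → x = y := by
    intro m x y h
    have hu : IsUnit (algebraMap R (Localization.Away a₁) (a₁ ^ m)) :=
      IsLocalization.map_units _ (⟨a₁ ^ m, m, rfl⟩ : Submonoid.powers a₁)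
    exact hu.mul_left_cancel (by rw [mul_comm x, mul_comm y] at h; exact h)
  -- f maps R^df into (R/I)^df
  have hmem : ∀ x : dfSubring 𝒜 a₁ ha₁, f (x : Localization.Away a₁) ∈
      dfQuotSubring 𝒜 a₁ ha₁ π := by
    rintro ⟨x, m, r, hr, hx⟩
    refine ⟨m, r, hr, ?_⟩
    have := congrArg f hx
    rw [map_mul, hfalg, hfalg] at this
    simpa [RingHom.comp_apply] using this
  set h₀ : dfSubring 𝒜 a₁ ha₁ →+* dfQuotSubring 𝒜 a₁ ha₁ π :=
    (f.comp (dfSubring 𝒜 a₁ ha₁).subtype).codRestrict _ hmem with hh₀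
  have hcomm : ∀ x : dfSubring 𝒜 a₁ ha₁,
      (h₀ x : Localization.Away (π a₁)) = f (x : Localization.Away a₁) := fun x => rfl
  -- surjectivity
  have hsurj : Function.Surjective h₀ := by
    rintro ⟨y, m, r, hr, hy⟩
    refine ⟨⟨IsLocalization.mk' (Localization.Away a₁) r
      (⟨a₁ ^ m, m, rfl⟩ : Submonoid.powers a₁), m, r, hr,
      IsLocalization.mk'_spec _ _ _⟩, ?_⟩
    apply Subtype.ext
    rw [hcomm]
    apply hcan m
    have hx : IsLocalization.mk' (Localization.Away a₁) r
        (⟨a₁ ^ m, m, rfl⟩ : Submonoid.powers a₁)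
        * algebraMap R (Localization.Away a₁) (a₁ ^ m)
        = algebraMap R (Localization.Away a₁) r := IsLocalization.mk'_spec _ _ _
    have := congrArg f hx
    rw [map_mul, hfalg, hfalg] at this
    rw [this]
    exact hy.symm
  -- the key fact : h₀ (dfGen) = 0
  have hπb : π b = 0 := Ideal.Quotient.eq_zero_iff_mem.mpr (Ideal.mem_span_singleton_self b)
  have hgen : (dfGen 𝒜 a₁ ha₁ b hb : Localization.Away a₁)
      * algebraMap R (Localization.Away a₁) a₁
      = algebraMap R (Localization.Away a₁) b := IsLocalization.mk'_spec _ _ _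
  have hgen0 : h₀ (dfGen 𝒜 a₁ ha₁ b hb) = 0 := by
    apply Subtype.ext
    rw [hcomm]
    apply hcan 1
    have := congrArg f hgen
    rw [map_mul, hfalg, hfalg] at this
    rw [pow_one, this, hπb]
    simp
  -- kernel computation
  have hker : RingHom.ker h₀ = Ideal.span {dfGen 𝒜 a₁ ha₁ b hb} := by
    ext x
    rw [RingHom.mem_ker, Ideal.mem_span_singleton]
    constructor
    · intro hx0
      obtain ⟨m, r, hr, hx⟩ := x.2
      -- f x = 0
      have hfx : f (x : Localization.Away a₁) = 0 := by
        have := congrArg Subtype.val hx0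
        rw [hcomm] at this
        exact this
      have hπr : algebraMap (R ⧸ Ideal.span {b}) (Localization.Away (π a₁)) (π r) = 0 := by
        have := congrArg f hx
        rw [map_mul, hfalg, hfalg, hfx, zero_mul] at this
        exact this.symm
      obtain ⟨⟨c, k, rfl⟩, hc⟩ :=
        (IsLocalization.map_eq_zero_iff (Submonoid.powers (π a₁)) _ _).mp hπr
      have hmemI : a₁ ^ k * r ∈ Ideal.span {b} := by
        rw [← Ideal.Quotient.eq_zero_iff_mem]
        rw [map_mul, map_pow]
        exact hc
      obtain ⟨c, hcc⟩ := Ideal.mem_span_singleton.mp hmemI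
      -- a₁ ^ (k+1) * r = b * (a₁ * c)
      have heq : a₁ ^ (k + 1) * r = b * (a₁ * c) := by
        rw [pow_succ]
        calc a₁ ^ k * a₁ * r = a₁ * (a₁ ^ k * r) := by ring
        _ = a₁ * (b * c) := by rw [hcc]
        _ = b * (a₁ * c) := by ring
      set s' : R := (DirectSum.decompose 𝒜 (a₁ * c) (k + m) : R) with hs'def
      have hs' : s' ∈ 𝒜 (k + m) := SetLike.coe_mem _
      have hkey : b * s' = a₁ ^ (k + 1) * r := by
        have h1 : (DirectSum.decompose 𝒜 (b * (a₁ * c)) (1 + (k + m)) : R)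
            = b * s' := DirectSum.coe_decompose_mul_add_of_left_mem 𝒜 hb
        have h2 : a₁ ^ (k + 1) * r ∈ 𝒜 (1 + (k + m)) := by
          have := SetLike.mul_mem_graded (hpow (k + 1)) hr
          convert this using 2
          omega
        rw [← heq] at h1
        rw [← h1, DirectSum.decompose_of_mem_same 𝒜 h2, heq]
      -- the quotient element u = s' / a₁ ^ (k+m)
      set u : dfSubring 𝒜 a₁ ha₁ :=
        ⟨IsLocalization.mk' (Localization.Away a₁) s'
          (⟨a₁ ^ (k + m), k + m, rfl⟩ : Submonoid.powers a₁), k + m, s', hs',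
          IsLocalization.mk'_spec _ _ _⟩ with hudef
      refine ⟨u, ?_⟩
      apply Subtype.ext
      apply hcanR (k + m + 1)
      have hu : (u : Localization.Away a₁)
          * algebraMap R (Localization.Away a₁) (a₁ ^ (k + m))
          = algebraMap R (Localization.Away a₁) s' := IsLocalization.mk'_spec _ _ _
      rw [Subring.coe_mul]
      calc (x : Localization.Away a₁) * algebraMap R (Localization.Away a₁) (a₁ ^ (k + m + 1))
          = ((x : Localization.Away a₁) * algebraMap R (Localization.Away a₁) (a₁ ^ m))
            * algebraMap R (Localization.Away a₁) (a₁ ^ (k + 1)) := by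
            rw [mul_assoc, ← map_mul, ← pow_add]; ring_nf
        _ = algebraMap R (Localization.Away a₁) (a₁ ^ (k + 1) * r) := by
            rw [hx, ← map_mul, mul_comm]
        _ = algebraMap R (Localization.Away a₁) (b * s') := by rw [hkey]
        _ = ((dfGen 𝒜 a₁ ha₁ b hb : Localization.Away a₁)
              * algebraMap R (Localization.Away a₁) a₁)
            * ((u : Localization.Away a₁)
              * algebraMap R (Localization.Away a₁) (a₁ ^ (k + m))) := by
            rw [hgen, hu, ← map_mul]
        _ = ((dfGen 𝒜 a₁ ha₁ b hb : Localization.Away a₁) * (u : Localization.Away a₁))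
            * algebraMap R (Localization.Away a₁) (a₁ ^ (k + m + 1)) := by
            rw [pow_succ, map_mul]; ring
    · rintro ⟨c, rfl⟩
      rw [map_mul, hgen0, zero_mul]
  refine ⟨h₀, fun x => hcomm x, hsurj, hker, ?_⟩
  rw [← hker]
  exact ⟨RingHom.quotientKerEquivOfSurjective hsurj⟩
end

section
/- Let R and S be commutative rings with ℕ-gradings by additive subgroups 𝒜 : ℕ → AddSubgroup R and ℬ : ℕ → AddSubgroup S (each with 1 in degree 0, multiplicativity of the grading, and internal direct sum decomposition). Let f : R → S be an injective ring homomorphism with f(𝒜 n) ⊆ ℬ n for all n, let e ∈ 𝒜 1 and e' = f(e) ∈ ℬ 1. Assume that for every s ∈ S there exists n ∈ ℕ such that s · (e')ⁿ lies in the range of f. Then f induces a ring isomorphism from the subring { r / eᵐ : m ∈ ℕ, r ∈ 𝒜 m } of the localization of R away from e onto the subring { s / (e')ᵐ : m ∈ ℕ, s ∈ ℬ m } of the localization of S away from e'. -/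
open DirectSum in
lemma mem_of_map_mem_aux {R S : Type*} [CommRing R] [CommRing S]
    (𝒜 : ℕ → AddSubgroup R) (ℬ : ℕ → AddSubgroup S) [GradedRing 𝒜] [GradedRing ℬ]
    (f : R →+* S) (hinj : Function.Injective f)
    (hgraded : ∀ n : ℕ, ∀ x ∈ 𝒜 n, f x ∈ ℬ n)
    {r : R} {k : ℕ} (h : f r ∈ ℬ k) : r ∈ 𝒜 k := by
  classical
  have hr : r = ∑ i ∈ (decompose 𝒜 r).support, (decompose 𝒜 r i : R) :=
    (DirectSum.sum_support_decompose 𝒜 r).symm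
  have key : ∀ j, j ≠ k → (decompose 𝒜 r j : R) = 0 := by
    intro j hj
    apply hinj
    rw [map_zero]
    have h1 : (decompose ℬ (f r) j : S) = 0 := decompose_of_mem_ne ℬ h (Ne.symm hj)
    have h2 : (decompose ℬ (f r) j : S)
        = ∑ i ∈ (decompose 𝒜 r).support, (decompose ℬ (f (decompose 𝒜 r i : R)) j : S) := by
      conv_lhs => rw [hr, map_sum, DirectSum.decompose_sum]
      rw [DFinsupp.finset_sum_apply, AddSubmonoidClass.coe_finset_sum]
    rw [Finset.sum_eq_single j (fun i _ hij =>
        by rw [decompose_of_mem_ne ℬ (hgraded i _ (decompose 𝒜 r i).2) hij])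
        (fun hjs => by
          rw [DFinsupp.notMem_support_iff.mp hjs]
          simp)] at h2
    rw [decompose_of_mem_same ℬ (hgraded j _ (decompose 𝒜 r j).2)] at h2
    rw [← h2, h1]
  rw [hr]
  apply sum_mem
  intro i _
  by_cases hik : i = k
  · subst hik; exact (decompose 𝒜 r i).2
  · rw [key i hik]; exact zero_mem _


set_option synthInstance.maxHeartbeats 400000 in
/-- **Lemma `gr3`**: let `R`, `S` be ℕ-graded commutative rings, `f : R → S` an injective
graded ring homomorphism, `e ∈ 𝒜 1` and `e' = f e ∈ ℬ 1`.  If every `s ∈ S` satisfies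
`s * (e')^n ∈ range f` for some `n`, then `f` induces a ring isomorphism
`R^df_e ≅ S^df_{e'}` (compatible with the induced map of localizations). -/
theorem dfSubring_equiv_of_cofinal
    {R S : Type*} [CommRing R] [CommRing S]
    (𝒜 : ℕ → AddSubgroup R) (ℬ : ℕ → AddSubgroup S) [GradedRing 𝒜] [GradedRing ℬ]
    (f : R →+* S) (hinj : Function.Injective f)
    (hgraded : ∀ n : ℕ, ∀ x ∈ 𝒜 n, f x ∈ ℬ n)
    (e : R) (he : e ∈ 𝒜 1)
    (hsat : ∀ s : S, ∃ n : ℕ, s * (f e) ^ n ∈ Set.range f) :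
    ∃ g : dfSubring 𝒜 e he ≃+* dfSubring ℬ (f e) (hgraded 1 e he),
      ∀ x : dfSubring 𝒜 e he,
        (g x : Localization.Away (f e)) =
          Localization.awayMap f e (x : Localization.Away e) := by
  set F := Localization.awayMap f e with hFdef
  have hF : ∀ r : R, F (algebraMap R (Localization.Away e) r)
      = algebraMap S (Localization.Away (f e)) (f r) := fun r => IsLocalization.map_eq _ _
  have unitR : ∀ m : ℕ, IsUnit (algebraMap R (Localization.Away e) (e ^ m)) :=
    fun m => IsLocalization.map_units _ (⟨e ^ m, m, rfl⟩ : Submonoid.powers e)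
  have unitS : ∀ m : ℕ, IsUnit (algebraMap S (Localization.Away (f e)) ((f e) ^ m)) :=
    fun m => IsLocalization.map_units _ (⟨(f e) ^ m, m, rfl⟩ : Submonoid.powers (f e))
  have hmaps : ∀ x ∈ dfSubring 𝒜 e he, F x ∈ dfSubring ℬ (f e) (hgraded 1 e he) := by
    rintro x ⟨m, r, hr, hx⟩
    refine ⟨m, f r, hgraded m r hr, ?_⟩
    rw [← map_pow, ← hF, ← map_mul, hx, hF]
  set F' : dfSubring 𝒜 e he →+* dfSubring ℬ (f e) (hgraded 1 e he) :=
    (F.comp (dfSubring 𝒜 e he).subtype).codRestrict _ (fun x => hmaps x x.2) with hF'def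
  have hF'coe : ∀ x : dfSubring 𝒜 e he, (F' x : Localization.Away (f e)) = F x := fun x => rfl
  have hFinj : Function.Injective F' := by
    rw [injective_iff_map_eq_zero]
    rintro ⟨x, m, r, hr, hx⟩ h0
    have h0' : F x = 0 := by
      have := congrArg (Subtype.val) h0
      simpa [hF'coe] using this
    have hz : algebraMap S (Localization.Away (f e)) (f r) = 0 := by
      rw [← hF, ← hx, map_mul, h0', zero_mul]
    obtain ⟨c, hc⟩ := (IsLocalization.map_eq_zero_iff (Submonoid.powers (f e)) _ _).mp hz
    obtain ⟨k, hk⟩ := c.2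
    have hk' : (f e) ^ k = (c : S) := hk
    have : f (e ^ k * r) = 0 := by rw [map_mul, map_pow, hk', hc]
    have hek : e ^ k * r = 0 := hinj (by rw [this, map_zero])
    have hralg : algebraMap R (Localization.Away e) r = 0 := by
      have := congrArg (algebraMap R (Localization.Away e)) hek
      rw [map_mul, map_zero] at this
      exact ((unitR k).mul_right_eq_zero).mp this
    have hx0 : x = 0 := ((unitR m).mul_left_eq_zero).mp (by rw [hx, hralg])
    exact Subtype.ext hx0
  have hFsurj : Function.Surjective F' := by
    rintro ⟨y, m, s, hs, hy⟩
    obtain ⟨n, r, hr⟩ := hsat s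
    have hfe : (f e) ^ n ∈ ℬ n := by simpa using SetLike.pow_mem_graded n (hgraded 1 e he)
    have hfr : f r ∈ ℬ (m + n) := by
      rw [hr]; exact SetLike.mul_mem_graded hs hfe
    have hrA : r ∈ 𝒜 (m + n) := mem_of_map_mem_aux 𝒜 ℬ f hinj hgraded hfr
    set x : Localization.Away e := IsLocalization.mk' _ r
      (⟨e ^ (m + n), m + n, rfl⟩ : Submonoid.powers e) with hxdef
    have hx : x * algebraMap R (Localization.Away e) (e ^ (m + n))
        = algebraMap R (Localization.Away e) r := IsLocalization.mk'_spec _ r _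
    refine ⟨⟨x, m + n, r, hrA, hx⟩, ?_⟩
    apply Subtype.ext
    rw [hF'coe]
    apply (unitS (m + n)).mul_right_cancel
    show F x * algebraMap S (Localization.Away (f e)) ((f e) ^ (m + n))
        = y * algebraMap S (Localization.Away (f e)) ((f e) ^ (m + n))
    rw [← map_pow, ← hF, ← map_mul, hx, hF, hr, map_mul, ← hy, pow_add, map_mul, map_mul, hF, hF]
    simp only [map_pow]
    ring
  refine ⟨RingEquiv.ofBijective F' ⟨hFinj, hFsurj⟩, fun x => ?_⟩
  exact hF'coe x
end

section
/- Let n ≥ 1 and let B ⊆ ℝⁿ be a set belonging to the Boolean algebra of subsets of ℝⁿ generated by the half-spaces { x ∈ ℝⁿ : k₁x₁ + ⋯ + kₙxₙ ≥ 0 } with k₁, …, kₙ ∈ ℤ (i.e. B is a finite Boolean combination of such sets). Let Q be a polynomial in n variables with rational coefficients. If Q(x) = 0 for every point x ∈ B with all coordinates rational, then Q(x) = 0 for every point x ∈ B. -/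
/-- Membership in the Boolean algebra of subsets of `ℝⁿ` generated by the half-spaces
`{ x : k₁x₁ + ⋯ + kₙxₙ ≥ 0 }` with integer coefficients `kᵢ`: the finite Boolean
combinations of such half-spaces. -/
inductive IsIntLinearBooleanComb (n : ℕ) : Set (Fin n → ℝ) → Prop
  | halfspace (k : Fin n → ℤ) :
      IsIntLinearBooleanComb n { x : Fin n → ℝ | 0 ≤ ∑ i, (k i : ℝ) * x i }
  | compl {s : Set (Fin n → ℝ)} :
      IsIntLinearBooleanComb n s → IsIntLinearBooleanComb n sᶜ
  | union {s t : Set (Fin n → ℝ)} :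
      IsIntLinearBooleanComb n s → IsIntLinearBooleanComb n t →
        IsIntLinearBooleanComb n (s ∪ t)

/-! `B` is a union of sign cells of finitely many rational linear forms: whether `y ∈ B` depends
only on the signs of these forms at `y`. Near a point `x`, the cell of `x` is the rational subspace
cut out by the forms vanishing at `x`. The real solutions of rational linear equations are the
real span of the rational ones (eliminate one equation `ℓ` at a time through a rational `u` with
`ℓ(u) = 1`), so rational points are dense in that subspace. Hence rational points of `B`
accumulate at every `x ∈ B`, and `Q(x) = 0` by continuity. -/

open Submodule Matrix Topology Filter

theorem Submodule.span_subset_closure_of_denseRange {K L E : Type*} [CommSemiring K] [Semiring L]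
    [Algebra K L] [AddCommMonoid E] [Module K E] [Module L E] [IsScalarTower K L E]
    [TopologicalSpace L] [TopologicalSpace E] [ContinuousAdd E] [ContinuousSMul L E]
    (hK : DenseRange (algebraMap K L)) (M : Submodule K E) :
    (span L (M : Set E) : Set E) ⊆ closure M := by
  intro x hx
  induction hx using span_induction with
  | mem y hy => exact subset_closure hy
  | zero => exact subset_closure M.zero_mem
  | add y z _ _ hy hz =>
    exact map_mem_closure₂ continuous_add hy hz fun a ha b hb => M.add_mem ha hb
  | smul c y _ hy =>
    refine map_mem_closure₂ continuous_smul (hK c) hy ?_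
    rintro _ ⟨q, rfl⟩ b hb
    rw [algebraMap_smul]
    exact M.smul_mem q hb

section

variable {K L ι : Type*} [Field K] [CommRing L] [Algebra K L] [Fintype ι]

theorem algebraMap_comp_dotProduct_piAlgebraMap (k v : ι → K) :
    (algebraMap K L ∘ k) ⬝ᵥ Pi.algebraMap ι K L v = algebraMap K L (k ⬝ᵥ v) :=
  (RingHom.map_dotProduct _ k v).symm

theorem mem_span_map_inf_ker_of_dotProduct_eq_zero (W : Submodule K (ι → K)) (k : ι → K)
    {x : ι → L} (hx : x ∈ span L (W.map (Pi.algebraMap ι K L) : Set (ι → L)))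
    (hkx : (algebraMap K L ∘ k) ⬝ᵥ x = 0) :
    x ∈ span L ((W ⊓ LinearMap.ker (dotProductBilin K K k)).map (Pi.algebraMap ι K L) :
      Set (ι → L)) := by
  by_cases hW : W ≤ LinearMap.ker (dotProductBilin K K k)
  · rwa [inf_eq_left.2 hW]
  obtain ⟨w, hwW, hkw⟩ := SetLike.not_le_iff_exists.1 hW
  set u := (k ⬝ᵥ w)⁻¹ • w
  have hku : k ⬝ᵥ u = 1 := by
    simp only [LinearMap.mem_ker, dotProductBilin_apply_apply] at hkw
    simp [u, hkw]
  -- `y ↦ y - ⟨k, y⟩ u` projects the span of `W` onto the span of `W ∩ ker k`.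
  let p : (ι → L) →ₗ[L] (ι → L) := LinearMap.id -
    (dotProductBilin L L (algebraMap K L ∘ k)).smulRight (Pi.algebraMap ι K L u)
  have hp : span L (W.map (Pi.algebraMap ι K L) : Set (ι → L)) ≤
      (span L ((W ⊓ LinearMap.ker (dotProductBilin K K k)).map (Pi.algebraMap ι K L) :
        Set (ι → L))).comap p := by
    rw [span_le]
    rintro _ ⟨v, hv, rfl⟩
    refine subset_span ⟨v - (k ⬝ᵥ v) • u, ⟨W.sub_mem hv (W.smul_mem _ (W.smul_mem _ hwW)), ?_⟩, ?_⟩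
    · simp [dotProduct_sub, hku]
    · simp [p, algebraMap_comp_dotProduct_piAlgebraMap, algebraMap_smul]
  simpa [p, hkx] using hp hx

theorem span_range_piAlgebraMap :
    span L (LinearMap.range (Pi.algebraMap ι K L) : Set (ι → L)) = ⊤ := by
  classical
  refine eq_top_iff.2 fun x _ => ?_
  rw [pi_eq_sum_univ x]
  refine sum_mem fun i _ => smul_mem _ _ (subset_span ⟨Pi.single i 1, ?_⟩)
  ext j
  simp [Pi.algebraMap, Pi.single_apply, eq_comm]

theorem mem_span_map_iInf_ker_of_dotProduct_eq_zero (s : Finset (ι → K)) {x : ι → L}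
    (hx : ∀ k ∈ s, (algebraMap K L ∘ k) ⬝ᵥ x = 0) :
    x ∈ span L ((⨅ k ∈ s, LinearMap.ker (dotProductBilin K K k)).map (Pi.algebraMap ι K L) :
      Set (ι → L)) := by
  classical
  induction s using Finset.induction_on with
  | empty => simp [span_range_piAlgebraMap]
  | insert k s _ ih =>
    rw [Finset.iInf_insert, inf_comm]
    exact mem_span_map_inf_ker_of_dotProduct_eq_zero _ k
      (ih fun k' hk' => hx k' (Finset.mem_insert_of_mem hk')) (hx k (Finset.mem_insert_self k s))

theorem mem_closure_map_iInf_ker_of_dotProduct_eq_zero [TopologicalSpace L] [IsTopologicalRing L]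
    (hK : DenseRange (algebraMap K L)) (s : Finset (ι → K)) {x : ι → L}
    (hx : ∀ k ∈ s, (algebraMap K L ∘ k) ⬝ᵥ x = 0) :
    x ∈ closure ((⨅ k ∈ s, LinearMap.ker (dotProductBilin K K k)).map (Pi.algebraMap ι K L) :
      Set (ι → L)) :=
  span_subset_closure_of_denseRange hK _ (mem_span_map_iInf_ker_of_dotProduct_eq_zero s hx)

end

theorem MvPolynomial.continuous_aeval {σ R A : Type*} [CommSemiring R] [CommSemiring A]
    [Algebra R A] [TopologicalSpace A] [IsTopologicalSemiring A] (p : MvPolynomial σ R) :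
    Continuous fun x : σ → A => aeval x p := by
  simpa only [aeval_def, eval_map] using continuous_eval (p.map (algebraMap R A))

theorem ContinuousAt.eventually_sign_eq {X α : Type*} [TopologicalSpace X] [Zero α]
    [LinearOrder α] [TopologicalSpace α] [OrderTopology α] {f : X → α} {x : X}
    (hf : ContinuousAt f x) (hx : f x ≠ 0) :
    ∀ᶠ y in 𝓝 x, SignType.sign (f y) = SignType.sign (f x) := by
  have h := (continuousAt_sign_of_ne_zero hx).comp hf
  rw [ContinuousAt, nhds_discrete SignType] at h
  exact tendsto_pure.1 h

theorem mem_closure_setOf_rat_and_sign_eq {ι : Type*} [Fintype ι] (s : Finset (ι → ℚ))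
    (x : ι → ℝ) :
    x ∈ closure {y : ι → ℝ | (∀ i, ∃ q : ℚ, y i = q) ∧
      ∀ k ∈ s, SignType.sign ((algebraMap ℚ ℝ ∘ k) ⬝ᵥ y) =
        SignType.sign ((algebraMap ℚ ℝ ∘ k) ⬝ᵥ x)} := by
  set ℓ : (ι → ℚ) → (ι → ℝ) → ℝ := fun k y => (algebraMap ℚ ℝ ∘ k) ⬝ᵥ y
  set s₀ := s.filter (ℓ · x = 0)
  set R := ((⨅ k ∈ s₀, LinearMap.ker (dotProductBilin ℚ ℚ k)).map (Pi.algebraMap ι ℚ ℝ) :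
    Set (ι → ℝ))
  have hxR : x ∈ closure R := mem_closure_map_iInf_ker_of_dotProduct_eq_zero
    Rat.denseRange_cast s₀ fun k hk => (Finset.mem_filter.1 hk).2
  have hsign : ∀ᶠ y in 𝓝 x, ∀ k ∈ s, ℓ k x ≠ 0 → SignType.sign (ℓ k y) = SignType.sign (ℓ k x) :=
    (eventually_all_finset s).2 fun k _ => eventually_imp_distrib_left.2
      fun hk => ContinuousAt.eventually_sign_eq (by fun_prop) hk
  rw [mem_closure_iff_nhds] at hxR ⊢
  intro t ht
  obtain ⟨_, ⟨hyt, hy⟩, v, hv, rfl⟩ := hxR _ (inter_mem ht hsign)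
  refine ⟨_, hyt, fun i => ⟨v i, rfl⟩, fun k hk => ?_⟩
  by_cases hkx : ℓ k x = 0
  · have hkv : k ⬝ᵥ v = 0 := by
      simpa using (mem_iInf _).1 ((mem_iInf _).1 hv k) (Finset.mem_filter.2 ⟨hk, hkx⟩)
    simp [ℓ, hkx, algebraMap_comp_dotProduct_piAlgebraMap, hkv]
  · exact hy k hk hkx

theorem IsIntLinearBooleanComb.exists_finset_forall_sign_eq_imp {n : ℕ} {B : Set (Fin n → ℝ)}
    (hB : IsIntLinearBooleanComb n B) :
    ∃ s : Finset (Fin n → ℚ), ∀ y z : Fin n → ℝ,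
      (∀ k ∈ s, SignType.sign ((algebraMap ℚ ℝ ∘ k) ⬝ᵥ y) =
        SignType.sign ((algebraMap ℚ ℝ ∘ k) ⬝ᵥ z)) → (y ∈ B ↔ z ∈ B) := by
  induction hB with
  | halfspace k =>
    refine ⟨{fun i => (k i : ℚ)}, fun y z h => ?_⟩
    have hform : ∀ y : Fin n → ℝ,
        ∑ i, (k i : ℝ) * y i = (algebraMap ℚ ℝ ∘ fun i => (k i : ℚ)) ⬝ᵥ y := fun y => by
      simp [dotProduct]
    simp only [Set.mem_ofPred_eq]
    rw [hform, hform, ← sign_nonneg_iff, h _ (Finset.mem_singleton_self _), sign_nonneg_iff]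
  | compl _ ih =>
    obtain ⟨s, hs⟩ := ih
    exact ⟨s, fun y z h => not_congr (hs y z h)⟩
  | union _ _ ih₁ ih₂ =>
    obtain ⟨s₁, hs₁⟩ := ih₁
    obtain ⟨s₂, hs₂⟩ := ih₂
    refine ⟨s₁ ∪ s₂, fun y z h => or_congr ?_ ?_⟩
    · exact hs₁ y z fun k hk => h k (Finset.mem_union_left _ hk)
    · exact hs₂ y z fun k hk => h k (Finset.mem_union_right _ hk)

theorem mvPolynomial_eq_zero_of_eq_zero_on_rat_points_general
    (n : ℕ) (B : Set (Fin n → ℝ)) (hB : IsIntLinearBooleanComb n B)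
    (Q : MvPolynomial (Fin n) ℚ)
    (hQ : ∀ x ∈ B, (∀ i, ∃ q : ℚ, x i = (q : ℝ)) → MvPolynomial.aeval x Q = 0) :
    ∀ x ∈ B, MvPolynomial.aeval x Q = 0 := by
  obtain ⟨s, hs⟩ := hB.exists_finset_forall_sign_eq_imp
  intro x hx
  refine closure_minimal (fun y hy => hQ y ((hs y x hy.2).2 hx) hy.1)
    (isClosed_eq (MvPolynomial.continuous_aeval Q) continuous_const)
    (mem_closure_setOf_rat_and_sign_eq s x)

/-- If a polynomial `Q` with rational coefficients vanishes at every rational point of a set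
`B ⊆ ℝⁿ` that is a finite Boolean combination of integer-coefficient half-spaces, then `Q`
vanishes on all of `B`. -/
theorem mvPolynomial_eq_zero_of_eq_zero_on_rat_points
    (n : ℕ) (hn : 0 < n) (B : Set (Fin n → ℝ)) (hB : IsIntLinearBooleanComb n B)
    (Q : MvPolynomial (Fin n) ℚ)
    (hQ : ∀ x ∈ B, (∀ i, ∃ q : ℚ, x i = (q : ℝ)) → MvPolynomial.aeval x Q = 0) :
    ∀ x ∈ B, MvPolynomial.aeval x Q = 0 :=
  mvPolynomial_eq_zero_of_eq_zero_on_rat_points_general n B hB Q hQ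
end

section
/- Let F be a field with a valuation v : F → Γ₀ into a linearly ordered commutative group with zero, and let π ∈ F satisfy v(π) > 1. Let g ∈ SL₂(F) have entries g = [[x, y], [z, w]] (so xw − yz = 1). Then g lies in the double coset I · D · I, where D = [[π, 0], [0, π⁻¹]] and I is the Iwahori subgroup, if and only if v(x) = v(π), v(y) ≤ v(π), v(z) < v(π), and v(w) ≤ v(π). -/
/-!
Write `D = diag(π, π⁻¹)`. The `(i, j)` entry of `i₁ D i₂` is
`(i₁)ᵢ₀ π (i₂)₀ⱼ + (i₁)ᵢ₁ π⁻¹ (i₂)₁ⱼ`. For Iwahori matrices the second summand has valuation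
`≤ v(π)⁻¹ < v(π)` and the first has valuation `≤ v(π)`, strictly less when `i = 1`, and equal to
`v(π)` at `(0, 0)` because the diagonal entries of an Iwahori matrix are units. Conversely, once
`v(x) = v(π)` the matrix factors as `[[1, 0], [z/x, 1]] · D · [[x/π, y/π], [0, π/x]]`, and the
remaining conditions say exactly that both outer factors are Iwahori.
-/

/-- Membership in the Iwahori subgroup of `SL₂` of a valued field: a matrix of determinant `1`,
entries of valuation at most `1`, and lower-left entry of valuation strictly less than `1`
(i.e. a matrix over the valuation ring whose residue is upper triangular). -/
def IwahoriMem {F Γ₀ : Type*} [Field F] [LinearOrderedCommGroupWithZero Γ₀]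
    (v : Valuation F Γ₀) (m : Matrix (Fin 2) (Fin 2) F) : Prop :=
  m.det = 1 ∧ v (m 0 0) ≤ 1 ∧ v (m 0 1) ≤ 1 ∧ v (m 1 0) < 1 ∧ v (m 1 1) ≤ 1

theorem Matrix.mul_fin_two_diag_mul_apply {R : Type*} [CommRing R]
    (m n : Matrix (Fin 2) (Fin 2) R) (s t : R) (i j : Fin 2) :
    (m * !![s, 0; 0, t] * n) i j = m i 0 * s * n 0 j + m i 1 * t * n 1 j := by
  simp [Matrix.mul_apply, Fin.sum_univ_two]

namespace IwahoriMem

variable {F Γ₀ : Type*} [Field F] [LinearOrderedCommGroupWithZero Γ₀] {v : Valuation F Γ₀}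
  {m : Matrix (Fin 2) (Fin 2) F}

theorem valuation_apply_le_one (h : IwahoriMem v m) (i j : Fin 2) : v (m i j) ≤ 1 := by
  obtain ⟨-, h00, h01, h10, h11⟩ := h
  fin_cases i <;> fin_cases j
  exacts [h00, h01, h10.le, h11]

theorem valuation_apply_zero_zero (h : IwahoriMem v m) : v (m 0 0) = 1 := by
  obtain ⟨hdet, h00, h01, h10, h11⟩ := h
  have hprod : m 0 0 * m 1 1 = 1 + m 0 1 * m 1 0 := by
    rw [Matrix.det_fin_two] at hdet
    linear_combination hdet
  have hv : v (m 0 0) * v (m 1 1) = 1 := by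
    rw [← map_mul, hprod, v.map_one_add_of_lt]
    exact (map_mul v _ _).trans_lt ((mul_le_of_le_one_left' h01).trans_lt h10)
  exact le_antisymm h00 (hv ▸ mul_le_of_le_one_right' h11)

end IwahoriMem

section DoubleCoset

variable {F Γ₀ : Type*} [Field F] [LinearOrderedCommGroupWithZero Γ₀] {v : Valuation F Γ₀}
  {π : F} {i₁ i₂ : Matrix (Fin 2) (Fin 2) F}

theorem valuation_mul_mul_le (h₁ : IwahoriMem v i₁) (h₂ : IwahoriMem v i₂) (i j : Fin 2) :
    v (i₁ i 0 * π * i₂ 0 j) ≤ v π := by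
  rw [map_mul, map_mul]
  calc v (i₁ i 0) * v π * v (i₂ 0 j) ≤ 1 * v π * 1 := by
        gcongr
        exacts [h₁.valuation_apply_le_one i 0, h₂.valuation_apply_le_one 0 j]
    _ = v π := by rw [one_mul, mul_one]

theorem valuation_mul_inv_mul_lt (hπ : 1 < v π) (h₁ : IwahoriMem v i₁) (h₂ : IwahoriMem v i₂)
    (i j : Fin 2) : v (i₁ i 1 * π⁻¹ * i₂ 1 j) < v π := by
  rw [map_mul, map_mul, map_inv₀]
  calc v (i₁ i 1) * (v π)⁻¹ * v (i₂ 1 j) ≤ 1 * (v π)⁻¹ * 1 := by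
        gcongr
        exacts [h₁.valuation_apply_le_one i 1, h₂.valuation_apply_le_one 1 j]
    _ < 1 := by rw [one_mul, mul_one]; exact inv_lt_one_of_one_lt₀ hπ
    _ < v π := hπ

theorem valuation_apply_iwahori_mul_diag_mul (hπ : 1 < v π) (h₁ : IwahoriMem v i₁)
    (h₂ : IwahoriMem v i₂) :
    let g := i₁ * !![π, 0; 0, π⁻¹] * i₂
    v (g 0 0) = v π ∧ v (g 0 1) ≤ v π ∧ v (g 1 0) < v π ∧ v (g 1 1) ≤ v π := by
  simp only [Matrix.mul_fin_two_diag_mul_apply]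
  have hlead_le := valuation_mul_mul_le (π := π) h₁ h₂
  have htail_lt := valuation_mul_inv_mul_lt hπ h₁ h₂
  refine ⟨?_, v.map_add_le (hlead_le 0 1) (htail_lt 0 1).le, ?_,
    v.map_add_le (hlead_le 1 1) (htail_lt 1 1).le⟩
  · have hlead : v (i₁ 0 0 * π * i₂ 0 0) = v π := by
      rw [map_mul, map_mul, h₁.valuation_apply_zero_zero, h₂.valuation_apply_zero_zero,
        one_mul, mul_one]
    rw [v.map_add_eq_of_lt_left (hlead ▸ htail_lt 0 0), hlead]
  · refine v.map_add_lt ?_ (htail_lt 1 0)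
    rw [map_mul, map_mul]
    calc v (i₁ 1 0) * v π * v (i₂ 0 0) < 1 * v π * 1 := by
          rw [h₂.valuation_apply_zero_zero, mul_one, mul_one]
          exact mul_lt_mul_of_pos_right h₁.2.2.2.1 (zero_lt_one.trans hπ)
      _ = v π := by rw [one_mul, mul_one]

end DoubleCoset

theorem Matrix.eq_lower_mul_diag_mul_upper_of_det {K : Type*} [Field K] {π x y z w : K}
    (hπ : π ≠ 0) (hx : x ≠ 0) (hdet : x * w - y * z = 1) :
    !![x, y; z, w] = !![1, 0; z / x, 1] * !![π, 0; 0, π⁻¹] * !![x / π, y / π; 0, (x / π)⁻¹] := by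
  ext i j
  fin_cases i <;> fin_cases j <;> simp <;> field_simp
  linear_combination hdet

section Generators

variable {F Γ₀ : Type*} [Field F] [LinearOrderedCommGroupWithZero Γ₀] {v : Valuation F Γ₀}

theorem iwahoriMem_lower_unipotent {c : F} (hc : v c < 1) : IwahoriMem v !![1, 0; c, 1] := by
  refine ⟨by simp [Matrix.det_fin_two_of], ?_, ?_, ?_, ?_⟩ <;> simp [hc]

theorem iwahoriMem_upper_triangular {a b : F} (ha : v a = 1) (hb : v b ≤ 1) :
    IwahoriMem v !![a, b; 0, a⁻¹] := by
  have ha₀ : a ≠ 0 := by rintro rfl; simp at ha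
  refine ⟨by simp [Matrix.det_fin_two_of, ha₀], ?_, ?_, ?_, ?_⟩ <;> simp [ha, hb]

end Generators

/-- Let `g = [[x, y], [z, w]] ∈ SL₂(F)` and `v(π) > 1`.  Then `g ∈ I · [[π, 0], [0, π⁻¹]] · I`
iff `v(x) = v(π)`, `v(y) ≤ v(π)`, `v(z) < v(π)` and `v(w) ≤ v(π)`. -/
theorem mem_iwahori_double_coset_diag_iff
    {F Γ₀ : Type*} [Field F] [LinearOrderedCommGroupWithZero Γ₀]
    (v : Valuation F Γ₀) (π : F) (hπ : 1 < v π)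
    (x y z w : F) (hdet : x * w - y * z = 1) :
    (∃ i₁ i₂ : Matrix (Fin 2) (Fin 2) F, IwahoriMem v i₁ ∧ IwahoriMem v i₂ ∧
        !![x, y; z, w] = i₁ * !![π, 0; 0, π⁻¹] * i₂) ↔
      v x = v π ∧ v y ≤ v π ∧ v z < v π ∧ v w ≤ v π := by
  have hvπ : v π ≠ 0 := (zero_lt_one.trans hπ).ne'
  constructor
  · rintro ⟨i₁, i₂, h₁, h₂, hg⟩
    simpa [← hg] using valuation_apply_iwahori_mul_diag_mul hπ h₁ h₂
  · rintro ⟨hx, hy, hz, -⟩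
    have hπ₀ : π ≠ 0 := v.ne_zero_iff.mp hvπ
    have hx₀ : x ≠ 0 := v.ne_zero_iff.mp (hx ▸ hvπ)
    refine ⟨_, _, iwahoriMem_lower_unipotent ?_, iwahoriMem_upper_triangular ?_ ?_,
      Matrix.eq_lower_mul_diag_mul_upper_of_det hπ₀ hx₀ hdet⟩
    · rwa [map_div₀, hx, div_lt_one₀ (pos_iff_ne_zero.mpr hvπ)]
    · rw [map_div₀, hx, div_self hvπ]
    · rwa [map_div₀, div_le_one₀ (pos_iff_ne_zero.mpr hvπ)]
end

section
/- Let F be a field with a valuation v : F → Γ₀ into a linearly ordered commutative group with zero, and let g ∈ SL₂(F) have entries g = [[x, y], [z, w]] (so xw − yz = 1). If v(z) ≥ v(w) (equivalently, in additive notation, val(z) ≤ val(w)), then z ≠ 0 and there exist a ∈ A(𝒪), n ∈ N and i ∈ I such that g = a · n · [[0, z⁻¹], [−z, 0]] · i. -/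
/-- Let `g = [[x, y], [z, w]] ∈ SL₂(F)`.  If `v(z) ≥ v(w)` (multiplicatively, `v(w) ≤ v(z)`;
additively, `val(z) ≤ val(w)`), then `z ≠ 0` and
`g ∈ A(𝒪) · N · [[0, z⁻¹], [−z, 0]] · I`: there are a diagonal matrix `[[u, 0], [0, u⁻¹]]`
with `v(u) = 1`, a unipotent matrix `[[1, t], [0, 1]]` and `i` in the Iwahori subgroup with
`g = [[u, 0], [0, u⁻¹]] · [[1, t], [0, 1]] · [[0, z⁻¹], [−z, 0]] · i`. -/
theorem mem_ANwI_of_val_ge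
    {F Γ₀ : Type*} [Field F] [LinearOrderedCommGroupWithZero Γ₀]
    (v : Valuation F Γ₀) (x y z w : F) (hdet : x * w - y * z = 1)
    (h : v w ≤ v z) :
    z ≠ 0 ∧ ∃ (u t : F) (i : Matrix (Fin 2) (Fin 2) F), v u = 1 ∧ IwahoriMem v i ∧
      !![x, y; z, w] = !![u, 0; 0, u⁻¹] * !![1, t; 0, 1] * !![0, z⁻¹; -z, 0] * i := by
  have hz : z ≠ 0 := by
    rintro rfl
    have hw : v w = 0 := le_antisymm (by simpa using h) zero_le'
    have : w = 0 := v.zero_iff.mp hw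
    subst this
    simp at hdet
  have hvz : v z ≠ 0 := fun hc => hz (v.zero_iff.mp hc)
  refine ⟨hz, 1, x / z, !![-1, -(w / z); 0, -1], v.map_one, ⟨?_, ?_, ?_, ?_, ?_⟩, ?_⟩
  · simp [Matrix.det_fin_two_of]
  · simp
  · show v (-(w / z)) ≤ 1
    rw [v.map_neg, map_div₀]
    exact div_le_one_of_le₀ h zero_le'
  · simp
  · simp
  · ext i j
    fin_cases i <;> fin_cases j <;> simp [Matrix.mul_apply, Fin.sum_univ_succ] <;>
      field_simp
    linear_combination -hdet
end

section
/- Let F be a field with a valuation v : F → Γ₀ into a linearly ordered commutative group with zero, and let g ∈ SL₂(F) have entries g = [[x, y], [z, w]] (so xw − yz = 1). If v(z) < v(w) (equivalently, in additive notation, val(z) > val(w)), then w ≠ 0 and there exist a ∈ A(𝒪), n ∈ N and i ∈ I such that g = a · n · [[w⁻¹, 0], [0, w]] · i. -/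
/-- Let `g = [[x, y], [z, w]] ∈ SL₂(F)`.  If `v(z) < v(w)` (additively, `val(z) > val(w)`),
then `w ≠ 0` and `g ∈ A(𝒪) · N · [[w⁻¹, 0], [0, w]] · I`: there are a diagonal matrix
`[[u, 0], [0, u⁻¹]]` with `v(u) = 1`, a unipotent matrix `[[1, t], [0, 1]]` and `i` in the
Iwahori subgroup with `g = [[u, 0], [0, u⁻¹]] · [[1, t], [0, 1]] · [[w⁻¹, 0], [0, w]] · i`. -/
theorem mem_ANdiagI_of_val_lt
    {F Γ₀ : Type*} [Field F] [LinearOrderedCommGroupWithZero Γ₀]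
    (v : Valuation F Γ₀) (x y z w : F) (hdet : x * w - y * z = 1)
    (h : v z < v w) :
    w ≠ 0 ∧ ∃ (u t : F) (i : Matrix (Fin 2) (Fin 2) F), v u = 1 ∧ IwahoriMem v i ∧
      !![x, y; z, w] = !![u, 0; 0, u⁻¹] * !![1, t; 0, 1] * !![w⁻¹, 0; 0, w] * i := by
  have hw : w ≠ 0 := by
    rintro rfl
    simp at h
  have hvw : v w ≠ 0 := by simpa using hw
  refine ⟨hw, 1, y / w, !![1, 0; z / w, 1], v.map_one, ⟨?_, ?_, ?_, ?_, ?_⟩, ?_⟩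
  · simp [Matrix.det_fin_two_of]
  · simp
  · simp
  · rw [show (!![(1:F), 0; z / w, 1]) 1 0 = z / w by simp, map_div₀]
    rw [div_lt_iff₀ (zero_lt_iff.mpr hvw), one_mul]; exact h
  · simp
  · ext i j
    fin_cases i <;> fin_cases j <;>
      simp [Matrix.mul_apply, Fin.sum_univ_succ] <;>
      field_simp <;> linear_combination hdet
end
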